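/- arXiv:1408.2329 — 3 statements merged into one kernel-verified Lean document; each statement's English description precedes it below -/
import Mathlib

section
/- The expression β²ω₁²ω₂² − αβ(ω₁²+ω₂²) + α², viewed as a quadratic in α with β ≠ 0, vanishes if and only if α = βω₁² or α = βω₂²; consequently the Poisson bivector of the Pais–Uhlenbeck oscillator with anchor parameters (α,β) ≠ (0,0) is degenerate exactly when α/β ∈ {ω₁², ω₂²}. -/
section CommRing

variable {R : Type*} [CommRing R]

theorem homogeneous_quadratic_eq_mul (α β a b : R) :
    β ^ 2 * a * b - α * β * (a + b) + α ^ 2 = (α - β * a) * (α - β * b) := by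
  ring

theorem homogeneous_quadratic_eq_zero_iff [NoZeroDivisors R] (α β a b : R) :
    β ^ 2 * a * b - α * β * (a + b) + α ^ 2 = 0 ↔ α = β * a ∨ α = β * b := by
  rw [homogeneous_quadratic_eq_mul, mul_eq_zero, sub_eq_zero, sub_eq_zero]

end CommRing

/-- For `β = 0` both sides are false: the form reduces to `α ^ 2 ≠ 0`, while `α / 0 = 0`
is neither root. -/
theorem homogeneous_quadratic_eq_zero_iff_div {K : Type*} [Field K] {α β a b : K}
    (hαβ : (α, β) ≠ (0, 0)) (ha : a ≠ 0) (hb : b ≠ 0) :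
    β ^ 2 * a * b - α * β * (a + b) + α ^ 2 = 0 ↔ α / β = a ∨ α / β = b := by
  rw [homogeneous_quadratic_eq_zero_iff]
  by_cases hβ : β = 0
  · have hα : α ≠ 0 := fun hα => hαβ (by rw [hα, hβ])
    simp [hα, hβ, ha.symm, hb.symm]
  · rw [div_eq_iff hβ, div_eq_iff hβ, mul_comm a, mul_comm b]

theorem pais_uhlenbeck_pfaffian_zero_iff_general
    (α β ω₁ ω₂ : ℝ) (hω₁ : 0 < ω₁) (hω₂ : 0 < ω₂) :
    (β ≠ 0 →
      (β ^ 2 * ω₁ ^ 2 * ω₂ ^ 2 - α * β * (ω₁ ^ 2 + ω₂ ^ 2) + α ^ 2 = 0 ↔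
        α = β * ω₁ ^ 2 ∨ α = β * ω₂ ^ 2)) ∧
    ((α, β) ≠ (0, 0) →
      (β ^ 2 * ω₁ ^ 2 * ω₂ ^ 2 - α * β * (ω₁ ^ 2 + ω₂ ^ 2) + α ^ 2 = 0 ↔
        α / β = ω₁ ^ 2 ∨ α / β = ω₂ ^ 2)) :=
  ⟨fun _ => homogeneous_quadratic_eq_zero_iff α β _ _,
    fun hαβ => homogeneous_quadratic_eq_zero_iff_div hαβ (pow_pos hω₁ 2).ne' (pow_pos hω₂ 2).ne'⟩

/-- the Pfaffian `β²ω₁²ω₂² − αβ(ω₁²+ω₂²) + α²` of the Pais–Uhlenbeck Poisson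
bivector vanishes (for `β ≠ 0`) iff `α = βω₁²` or `α = βω₂²`; consequently for
`(α,β) ≠ (0,0)` the bivector is degenerate exactly when `α/β ∈ {ω₁², ω₂²}`. -/
theorem pais_uhlenbeck_pfaffian_zero_iff
    (α β ω₁ ω₂ : ℝ) (hω₁ : 0 < ω₁) (hω₂ : 0 < ω₂) (hne : ω₁ ≠ ω₂) :
    (β ≠ 0 →
      (β ^ 2 * ω₁ ^ 2 * ω₂ ^ 2 - α * β * (ω₁ ^ 2 + ω₂ ^ 2) + α ^ 2 = 0 ↔
        α = β * ω₁ ^ 2 ∨ α = β * ω₂ ^ 2)) ∧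
    ((α, β) ≠ (0, 0) →
      (β ^ 2 * ω₁ ^ 2 * ω₂ ^ 2 - α * β * (ω₁ ^ 2 + ω₂ ^ 2) + α ^ 2 = 0 ↔
        α / β = ω₁ ^ 2 ∨ α / β = ω₂ ^ 2)) :=
  pais_uhlenbeck_pfaffian_zero_iff_general α β ω₁ ω₂ hω₁ hω₂
end

section
/- Assume ω₁² > α/β > ω₂² with β > 0 and ω₁ ≠ ω₂, ω₁, ω₂ > 0. Then the quadratic form H(x, ẋ, ẍ, x⃛) = ½[(x⃛+ω₁²ẋ)² + ω₂²(ẍ+ω₁²x)²]/[(ω₁²−ω₂²)(α−βω₂²)] − ½[(x⃛+ω₂²ẋ)² + ω₁²(ẍ+ω₂²x)²]/[(ω₁²−ω₂²)(α−βω₁²)] is positive definite on ℝ⁴. -/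
/-!
Since `ω₂² < α/β < ω₁²` and `β > 0`, the denominators `(ω₁² - ω₂²)(α - βω₂²)` and
`(ω₁² - ω₂²)(βω₁² - α)` are positive, so `H` is a positive combination of the sums of squares
`(x⃛ + ω₁²ẋ)² + ω₂²(ẍ + ω₁²x)²` and `(x⃛ + ω₂²ẋ)² + ω₁²(ẍ + ω₂²x)²`. Both vanish only if
`x⃛ + ω²ẋ = ẍ + ω²x = 0` for the two distinct values `ω² = ω₁², ω₂²`, which forces `z = 0`.
-/

section

variable {R : Type*}

theorem eq_zero_of_add_mul_eq_zero_of_add_mul_eq_zero [CommRing R] [IsDomain R] {p q x y : R}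
    (hpq : p ≠ q) (hp : x + p * y = 0) (hq : x + q * y = 0) : x = 0 ∧ y = 0 := by
  have hy : y = 0 :=
    (mul_eq_zero.mp (by linear_combination hp - hq : (p - q) * y = 0)).resolve_left
      (sub_ne_zero.mpr hpq)
  exact ⟨by simpa [hy] using hp, hy⟩

variable [CommRing R] [LinearOrder R] [IsStrictOrderedRing R]

theorem sq_add_mul_sq_pos_iff {q u v : R} (hq : 0 < q) :
    0 < u ^ 2 + q * v ^ 2 ↔ u ≠ 0 ∨ v ≠ 0 := by
  refine ⟨fun h => ?_, fun h => ?_⟩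
  · contrapose! h
    simp [h.1, h.2]
  · rcases h with hu | hv
    · exact add_pos_of_pos_of_nonneg (sq_pos_of_ne_zero hu) (by positivity)
    · exact add_pos_of_nonneg_of_pos (sq_nonneg u) (mul_pos hq (sq_pos_of_ne_zero hv))

theorem sq_add_mul_sq_pos_or_of_ne_zero {p q : R} (hpq : p ≠ q) (hp : 0 < p) (hq : 0 < q)
    {z : Fin 4 → R} (hz : z ≠ 0) :
    0 < (z 3 + p * z 1) ^ 2 + q * (z 2 + p * z 0) ^ 2 ∨
      0 < (z 3 + q * z 1) ^ 2 + p * (z 2 + q * z 0) ^ 2 := by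
  rw [sq_add_mul_sq_pos_iff hq, sq_add_mul_sq_pos_iff hp]
  contrapose! hz
  obtain ⟨⟨hp₃₁, hp₂₀⟩, hq₃₁, hq₂₀⟩ := hz
  obtain ⟨h₃, h₁⟩ := eq_zero_of_add_mul_eq_zero_of_add_mul_eq_zero hpq hp₃₁ hq₃₁
  obtain ⟨h₂, h₀⟩ := eq_zero_of_add_mul_eq_zero_of_add_mul_eq_zero hpq hp₂₀ hq₂₀
  ext i
  fin_cases i <;> assumption

end

theorem add_pos_of_nonneg_of_nonneg_of_pos_or {R : Type*} [AddCommMonoid R] [PartialOrder R]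
    [IsOrderedCancelAddMonoid R] {a b : R} (ha : 0 ≤ a) (hb : 0 ≤ b) (h : 0 < a ∨ 0 < b) :
    0 < a + b :=
  h.elim (add_pos_of_pos_of_nonneg · hb) (add_pos_of_nonneg_of_pos ha)

theorem pais_uhlenbeck_hamiltonian_positive_definite_general
    (α β ω₁ ω₂ : ℝ) (hβ : 0 < β) (hω₂ : 0 < ω₂)
    (h₁ : ω₁ ^ 2 > α / β) (h₂ : α / β > ω₂ ^ 2)
    (H : (Fin 4 → ℝ) → ℝ)
    (hH : H = fun z =>
      (1/2) * ((z 3 + ω₁ ^ 2 * z 1) ^ 2 + ω₂ ^ 2 * (z 2 + ω₁ ^ 2 * z 0) ^ 2) /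
        ((ω₁ ^ 2 - ω₂ ^ 2) * (α - β * ω₂ ^ 2)) -
      (1/2) * ((z 3 + ω₂ ^ 2 * z 1) ^ 2 + ω₁ ^ 2 * (z 2 + ω₂ ^ 2 * z 0) ^ 2) /
        ((ω₁ ^ 2 - ω₂ ^ 2) * (α - β * ω₁ ^ 2))) :
    ∀ z : Fin 4 → ℝ, z ≠ 0 → 0 < H z := by
  intro z hz
  have hω₂₁ : ω₂ ^ 2 < ω₁ ^ 2 := h₂.trans h₁
  have hω₂sq : 0 < ω₂ ^ 2 := by positivity
  have hω₁sq : 0 < ω₁ ^ 2 := hω₂sq.trans hω₂₁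
  have hgap : 0 < ω₁ ^ 2 - ω₂ ^ 2 := sub_pos.mpr hω₂₁
  have hlow : 0 < α - β * ω₂ ^ 2 := by rw [gt_iff_lt, lt_div_iff₀ hβ] at h₂; linarith
  have hhigh : 0 < β * ω₁ ^ 2 - α := by rw [gt_iff_lt, div_lt_iff₀ hβ] at h₁; linarith
  have hH_eq : H z = (((z 3 + ω₁ ^ 2 * z 1) ^ 2 + ω₂ ^ 2 * (z 2 + ω₁ ^ 2 * z 0) ^ 2) /
        ((ω₁ ^ 2 - ω₂ ^ 2) * (α - β * ω₂ ^ 2)) +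
      ((z 3 + ω₂ ^ 2 * z 1) ^ 2 + ω₁ ^ 2 * (z 2 + ω₂ ^ 2 * z 0) ^ 2) /
        ((ω₁ ^ 2 - ω₂ ^ 2) * (β * ω₁ ^ 2 - α))) / 2 := by
    rw [hH]
    beta_reduce
    rw [show α - β * ω₁ ^ 2 = -(β * ω₁ ^ 2 - α) by ring, mul_neg, div_neg]
    ring
  rw [hH_eq]
  refine half_pos (add_pos_of_nonneg_of_nonneg_of_pos_or (by positivity) (by positivity) ?_)
  exact (sq_add_mul_sq_pos_or_of_ne_zero hω₂₁.ne' hω₁sq hω₂sq hz).imp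
    (div_pos · (mul_pos hgap hlow)) (div_pos · (mul_pos hgap hhigh))

/-- positive definiteness of the Pais–Uhlenbeck Hamiltonian for anchor parameters
with `ω₁² > α/β > ω₂²`, `β > 0`.  Here `z = (x, ẋ, ẍ, x⃛) ∈ ℝ⁴`. -/
theorem pais_uhlenbeck_hamiltonian_positive_definite
    (α β ω₁ ω₂ : ℝ) (hβ : 0 < β) (hω₁ : 0 < ω₁) (hω₂ : 0 < ω₂) (hne : ω₁ ≠ ω₂)
    (h₁ : ω₁ ^ 2 > α / β) (h₂ : α / β > ω₂ ^ 2)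
    (H : (Fin 4 → ℝ) → ℝ)
    (hH : H = fun z =>
      (1/2) * ((z 3 + ω₁ ^ 2 * z 1) ^ 2 + ω₂ ^ 2 * (z 2 + ω₁ ^ 2 * z 0) ^ 2) /
        ((ω₁ ^ 2 - ω₂ ^ 2) * (α - β * ω₂ ^ 2)) -
      (1/2) * ((z 3 + ω₂ ^ 2 * z 1) ^ 2 + ω₁ ^ 2 * (z 2 + ω₂ ^ 2 * z 0) ^ 2) /
        ((ω₁ ^ 2 - ω₂ ^ 2) * (α - β * ω₁ ^ 2))) :
    ∀ z : Fin 4 → ℝ, z ≠ 0 → 0 < H z :=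
  pais_uhlenbeck_hamiltonian_positive_definite_general α β ω₁ ω₂ hβ hω₂ h₁ h₂ H hH
end

section
/- Let A be a compactly supported 2-form on Minkowski space ℝ^{3,1} and suppose A¹, A² are 1-forms satisfying δA¹ = 0, δA² = 0, □A¹ = ∗dA, and □A² = δA, where □ = δd + dδ. Then ∗dA¹ + dA² = A + h where □h = 0 and δh = 0, ∗dh components are harmonic; in particular if the only solution of □h = 0 with appropriate support (advanced or retarded) is h = 0, then ∗dA¹ + dA² = A. -/
/-!
With `h = ∗dA¹ + dA² − A`, both first-order derivatives of `h` vanish: since `∗∗ = −1` and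
`dd = 0`, `δ∗dA¹ = 0`, so `δh = δdA² − δA = □A² − δA = 0` (as `δA² = 0`); and since `dd = 0`,
`∗dh = ∗d∗dA¹ − ∗dA = □A¹ − ∗dA = 0` (as `δA¹ = 0`). Hence `□h = δdh + dδh = ∗d∗(dh) + dδh = 0`.
-/

section HodgeComplex

variable {R L0 L1 L2 L3 : Type*} [Semiring R]
  [AddCommGroup L0] [Module R L0] [AddCommGroup L1] [Module R L1]
  [AddCommGroup L2] [Module R L2] [AddCommGroup L3] [Module R L3]

theorem codiff_hodge_d_eq_zero (d1 : L1 →ₗ[R] L2) (d2 : L2 →ₗ[R] L3)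
    (s2 : L2 →ₗ[R] L2) (s3 : L3 →ₗ[R] L1) (hd21 : d2.comp d1 = 0)
    (hs22 : s2.comp s2 = -LinearMap.id) (x : L1) :
    (s3.comp (d2.comp s2)) (s2 (d1 x)) = 0 := by
  have hss : s2 (s2 (d1 x)) = -d1 x := by simpa using LinearMap.congr_fun hs22 (d1 x)
  simp only [LinearMap.comp_apply, hss, map_neg, ← LinearMap.comp_apply d2 d1, hd21,
    LinearMap.zero_apply, neg_zero, map_zero]

theorem box_apply_of_coclosed (d0 : L0 →ₗ[R] L1) (d1 : L1 →ₗ[R] L2) (δ1 : L1 →ₗ[R] L0)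
    (δ2 : L2 →ₗ[R] L1) {a : L1} (ha : δ1 a = 0) :
    (δ2.comp d1 + d0.comp δ1) a = δ2 (d1 a) := by
  simp [ha]

theorem box_eq_zero_of_hodge_d_eq_zero_of_codiff_eq_zero (d1 : L1 →ₗ[R] L2)
    (d2 : L2 →ₗ[R] L3) (s2 : L2 →ₗ[R] L2) (s3 : L3 →ₗ[R] L1) (δ2 : L2 →ₗ[R] L1) {h : L2}
    (hdh : s3 (d2 h) = 0) (hδh : δ2 h = 0) :
    ((s2.comp (d1.comp s3)).comp d2 + d1.comp δ2) h = 0 := by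
  simp [hdh, hδh]

end HodgeComplex

theorem maxwell_repercussion_equation_general
    (L0 L1 L2 L3 : Type*)
    [AddCommGroup L0] [Module ℝ L0] [AddCommGroup L1] [Module ℝ L1]
    [AddCommGroup L2] [Module ℝ L2] [AddCommGroup L3] [Module ℝ L3]
    (d0 : L0 →ₗ[ℝ] L1) (d1 : L1 →ₗ[ℝ] L2) (d2 : L2 →ₗ[ℝ] L3)
    (s2 : L2 →ₗ[ℝ] L2) (s3 : L3 →ₗ[ℝ] L1)
    -- d² = 0
    (hd21 : d2.comp d1 = 0)
    -- ∗² = −1 on 2-forms, ∗∗ = 1 between 1- and 3-forms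
    (hs22 : s2.comp s2 = -LinearMap.id)
    -- codifferentials δ = ∗d∗ and the d'Alembertians □ = δd + dδ
    (δ2 : L2 →ₗ[ℝ] L1) (hδ2 : δ2 = s3.comp (d2.comp s2))
    (δ1 : L1 →ₗ[ℝ] L0) (δ3 : L3 →ₗ[ℝ] L2) (hδ3 : δ3 = s2.comp (d1.comp s3))
    (box1 : L1 →ₗ[ℝ] L1) (hbox1 : box1 = δ2.comp d1 + d0.comp δ1)
    (box2 : L2 →ₗ[ℝ] L2) (hbox2 : box2 = δ3.comp d2 + d1.comp δ2)
    (A : L2) (A1 A2 : L1)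
    (h1 : δ1 A1 = 0) (h2 : δ1 A2 = 0)
    (hw1 : box1 A1 = s3 (d2 A)) (hw2 : box1 A2 = δ2 A) :
    box2 (s2 (d1 A1) + d1 A2 - A) = 0 ∧
    δ2 (s2 (d1 A1) + d1 A2 - A) = 0 ∧
    ((∀ h : L2, box2 h = 0 → δ2 h = 0 → h = 0) → s2 (d1 A1) + d1 A2 = A) := by
  subst hbox1 hbox2 hδ3
  rw [box_apply_of_coclosed d0 d1 δ1 δ2 h1] at hw1
  rw [box_apply_of_coclosed d0 d1 δ1 δ2 h2] at hw2
  have hdd : d2 (d1 A2) = 0 := LinearMap.congr_fun hd21 A2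
  have hδh : δ2 (s2 (d1 A1) + d1 A2 - A) = 0 := by
    rw [map_sub, map_add, hδ2, codiff_hodge_d_eq_zero d1 d2 s2 s3 hd21 hs22,
      ← hδ2, hw2, zero_add, sub_self]
  have hdh : s3 (d2 (s2 (d1 A1) + d1 A2 - A)) = 0 := by
    have hδd : s3 (d2 (s2 (d1 A1))) = δ2 (d1 A1) := by rw [hδ2]; rfl
    rw [map_sub, map_add, map_sub, map_add, hdd, map_zero, add_zero, hδd, hw1, sub_self]
  have hboxh := box_eq_zero_of_hodge_d_eq_zero_of_codiff_eq_zero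
    d1 d2 s2 s3 δ2 hdh hδh
  exact ⟨hboxh, hδh, fun hunique => sub_eq_zero.mp (hunique _ hboxh hδh)⟩

/-- repercussion equation for Maxwell theory, abstract de Rham model:
given a compactly supported 2-form `A` and 1-forms `A¹`, `A²` with `δA¹ = 0`, `δA² = 0`,
`□A¹ = ∗dA`, `□A² = δA` (`□ = δd + dδ`), the 2-form `h = ∗dA¹ + dA² − A` satisfies `□h = 0`
and `δh = 0`; in particular, if the only such solution (with the appropriate advanced or
retarded support) is `h = 0`, then `∗dA¹ + dA² = A`. -/
theorem maxwell_repercussion_equation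
    (L0 L1 L2 L3 : Type*)
    [AddCommGroup L0] [Module ℝ L0] [AddCommGroup L1] [Module ℝ L1]
    [AddCommGroup L2] [Module ℝ L2] [AddCommGroup L3] [Module ℝ L3]
    (d0 : L0 →ₗ[ℝ] L1) (d1 : L1 →ₗ[ℝ] L2) (d2 : L2 →ₗ[ℝ] L3)
    (s1 : L1 →ₗ[ℝ] L3) (s2 : L2 →ₗ[ℝ] L2) (s3 : L3 →ₗ[ℝ] L1)
    -- d² = 0
    (hd10 : d1.comp d0 = 0) (hd21 : d2.comp d1 = 0)
    -- ∗² = −1 on 2-forms, ∗∗ = 1 between 1- and 3-forms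
    (hs22 : s2.comp s2 = -LinearMap.id) (hs13 : s1.comp s3 = LinearMap.id)
    (hs31 : s3.comp s1 = LinearMap.id)
    -- codifferentials δ = ∗d∗ and the d'Alembertians □ = δd + dδ
    (δ2 : L2 →ₗ[ℝ] L1) (hδ2 : δ2 = s3.comp (d2.comp s2))
    (δ1 : L1 →ₗ[ℝ] L0) (δ3 : L3 →ₗ[ℝ] L2) (hδ3 : δ3 = s2.comp (d1.comp s3))
    (box1 : L1 →ₗ[ℝ] L1) (hbox1 : box1 = δ2.comp d1 + d0.comp δ1)
    (box2 : L2 →ₗ[ℝ] L2) (hbox2 : box2 = δ3.comp d2 + d1.comp δ2)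
    (A : L2) (A1 A2 : L1)
    (h1 : δ1 A1 = 0) (h2 : δ1 A2 = 0)
    (hw1 : box1 A1 = s3 (d2 A)) (hw2 : box1 A2 = δ2 A) :
    box2 (s2 (d1 A1) + d1 A2 - A) = 0 ∧
    δ2 (s2 (d1 A1) + d1 A2 - A) = 0 ∧
    ((∀ h : L2, box2 h = 0 → δ2 h = 0 → h = 0) → s2 (d1 A1) + d1 A2 = A) :=
  maxwell_repercussion_equation_general L0 L1 L2 L3 d0 d1 d2 s2 s3 hd21 hs22 δ2 hδ2 δ1 δ3 hδ3 box1
    hbox1 box2 hbox2 A A1 A2 h1 h2 hw1 hw2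
end
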